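/- arXiv:1904.02661 — 3 statements merged into one kernel-verified Lean document; each statement's English description precedes it below -/
import Mathlib

section
/- Let G be a cubic graph. If G admits a P10-coloring (P10 ≺ G, where P10 is the Petersen graph), then G admits a Berge–Fulkerson covering, i.e., there exist six (not necessarily distinct) perfect matchings of G such that every edge of G belongs to exactly two of them. -/
open SimpleGraph

/-- A graph is cubic if every vertex has degree 3. -/
def IsCubic {V : Type*} (G : SimpleGraph V) : Prop :=
  ∀ v : V, (G.neighborSet v).ncard = 3

/-- A proper edge-coloring: distinct edges of `G` sharing a vertex get different colors. -/
def IsProperEdgeColoring {V α : Type*} (G : SimpleGraph V) (c : Sym2 V → α) : Prop :=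
  ∀ e₁ ∈ G.edgeSet, ∀ e₂ ∈ G.edgeSet, e₁ ≠ e₂ → (∃ v, v ∈ e₁ ∧ v ∈ e₂) → c e₁ ≠ c e₂

/-- `S_c(v)`: the set of colors assigned by `c` to the edges of `G` incident to `v`. -/
def colorSet {V α : Type*} (G : SimpleGraph V) (c : Sym2 V → α) (v : V) : Set α :=
  c '' (G.incidenceSet v)

/-- An edge `uv` is poor if `|S_c(u) ∪ S_c(v)| = 3`. -/
def IsPoorEdge {V α : Type*} (G : SimpleGraph V) (c : Sym2 V → α) (u v : V) : Prop :=
  (colorSet G c u ∪ colorSet G c v).ncard = 3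

/-- An edge `uv` is rich if `|S_c(u) ∪ S_c(v)| = 5`. -/
def IsRichEdge {V α : Type*} (G : SimpleGraph V) (c : Sym2 V → α) (u v : V) : Prop :=
  (colorSet G c u ∪ colorSet G c v).ncard = 5

/-- A normal edge-coloring: a proper edge-coloring in which every edge is poor or rich. -/
def IsNormalEdgeColoring {V α : Type*} (G : SimpleGraph V) (c : Sym2 V → α) : Prop :=
  IsProperEdgeColoring G c ∧
    ∀ u v : V, G.Adj u v → IsPoorEdge G c u v ∨ IsRichEdge G c u v

/-- An `H`-coloring of `G`: a map on edges such that for every vertex `v` of `G` there is a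
vertex `w` of `H` with `φ(∂_G(v)) = ∂_H(w)`. -/
def IsHColoring {V W : Type*} (G : SimpleGraph V) (H : SimpleGraph W)
    (φ : Sym2 V → Sym2 W) : Prop :=
  ∀ v : V, ∃ w : W, φ '' (G.incidenceSet v) = H.incidenceSet w

/-- A perfect matching, as a set of edges: pairwise nonadjacent edges covering every vertex,
i.e., every vertex lies in exactly one edge of `M`. -/
def IsPerfectMatchingSet {V : Type*} (G : SimpleGraph V) (M : Set (Sym2 V)) : Prop :=
  M ⊆ G.edgeSet ∧ ∀ v : V, ∃! e, e ∈ M ∧ v ∈ e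

/-- A Berge–Fulkerson covering: six perfect matchings such that every edge of `G`
belongs to exactly two of them. -/
def IsBergeFulkersonCovering {V : Type*} (G : SimpleGraph V)
    (M : Fin 6 → Set (Sym2 V)) : Prop :=
  (∀ i, IsPerfectMatchingSet G (M i)) ∧
    ∀ e ∈ G.edgeSet, {i : Fin 6 | e ∈ M i}.ncard = 2

/-- Vertices of the Petersen graph: 2-element subsets of a 5-element set. -/
def PetersenVertex : Type := {s : Finset (Fin 5) // s.card = 2}

/-- The Petersen graph, as the Kneser graph `K(5,2)`. -/
def Petersen : SimpleGraph PetersenVertex where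
  Adj s t := Disjoint s.1 t.1
  symm := ⟨fun _ _ h => h.symm⟩
  loopless := ⟨fun s h => by
    have h2 := s.2
    have h' : Disjoint s.1 s.1 := h
    rw [disjoint_self] at h'
    rw [h'] at h2
    simp at h2⟩

instance : DecidableEq PetersenVertex :=
  inferInstanceAs (DecidableEq {s : Finset (Fin 5) // s.card = 2})

instance : Fintype PetersenVertex :=
  inferInstanceAs (Fintype {s : Finset (Fin 5) // s.card = 2})

instance : DecidableRel Petersen.Adj :=
  fun s t => inferInstanceAs (Decidable (Disjoint s.1 t.1))

/-- Convenience constructor for Petersen vertices. -/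
def pv (a b : Fin 5) (h : ({a, b} : Finset (Fin 5)).card = 2 := by decide) : PetersenVertex :=
  ⟨{a, b}, h⟩

/-- The six perfect matchings of the Petersen graph. -/
def NP : Fin 6 → Finset (Sym2 PetersenVertex)
  | 0 => {s(pv 0 1, pv 2 3), s(pv 0 2, pv 1 4), s(pv 0 3, pv 2 4), s(pv 0 4, pv 1 3), s(pv 1 2, pv 3 4)}
  | 1 => {s(pv 0 1, pv 2 3), s(pv 0 2, pv 3 4), s(pv 0 3, pv 1 4), s(pv 0 4, pv 1 2), s(pv 1 3, pv 2 4)}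
  | 2 => {s(pv 0 1, pv 2 4), s(pv 0 2, pv 1 3), s(pv 0 3, pv 1 4), s(pv 0 4, pv 2 3), s(pv 1 2, pv 3 4)}
  | 3 => {s(pv 0 1, pv 2 4), s(pv 0 2, pv 3 4), s(pv 0 3, pv 1 2), s(pv 0 4, pv 1 3), s(pv 1 4, pv 2 3)}
  | 4 => {s(pv 0 1, pv 3 4), s(pv 0 2, pv 1 3), s(pv 0 3, pv 2 4), s(pv 0 4, pv 1 2), s(pv 1 4, pv 2 3)}
  | 5 => {s(pv 0 1, pv 3 4), s(pv 0 2, pv 1 4), s(pv 0 3, pv 1 2), s(pv 0 4, pv 2 3), s(pv 1 3, pv 2 4)}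

lemma npSubset : ∀ i : Fin 6, ∀ e ∈ NP i, e ∈ Petersen.edgeSet := by decide

lemma npFilterCard : ∀ (i : Fin 6) (w : PetersenVertex),
    ((NP i).filter (fun e => w ∈ e)).card = 1 := by decide

lemma npCount : ∀ f ∈ Petersen.edgeSet,
    (Finset.univ.filter (fun i : Fin 6 => f ∈ NP i)).card = 2 := by decide

lemma npIncCard : ∀ w : PetersenVertex,
    (Finset.univ.filter (fun e : Sym2 PetersenVertex => e ∈ Petersen.incidenceSet w)).card = 3 := by
  decide

lemma mem_incidence_iff {V : Type*} (G : SimpleGraph V) (v : V) (e : Sym2 V) :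
    e ∈ G.incidenceSet v ↔ e ∈ G.edgeSet ∧ v ∈ e := Iff.rfl

lemma incidence_ncard {V : Type*} (G : SimpleGraph V) (hG : IsCubic G) (v : V) :
    (G.incidenceSet v).ncard = 3 := by
  have h := hG v
  classical
  rw [← Nat.card_coe_set_eq] at h ⊢
  rwa [Nat.card_congr (G.incidenceSetEquivNeighborSet v)]

lemma petersen_incidence_ncard (w : PetersenVertex) :
    (Petersen.incidenceSet w).ncard = 3 := by
  have h : Petersen.incidenceSet w =
      ↑(Finset.univ.filter (fun e : Sym2 PetersenVertex => e ∈ Petersen.incidenceSet w)) := by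
    ext e; simp
  rw [h, Set.ncard_coe_finset]
  exact npIncCard w

/-- A cubic graph admitting a `P10`-coloring admits a Berge–Fulkerson covering. -/
theorem petersen_coloring_implies_berge_fulkerson {V : Type*} (G : SimpleGraph V)
    (hG : IsCubic G)
    (hφ : ∃ φ : Sym2 V → Sym2 PetersenVertex, IsHColoring G Petersen φ) :
    ∃ M : Fin 6 → Set (Sym2 V), IsBergeFulkersonCovering G M := by
  obtain ⟨φ, hφ⟩ := hφ
  refine ⟨fun i => {e | e ∈ G.edgeSet ∧ φ e ∈ NP i}, ?_, ?_⟩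
  · -- each pullback is a perfect matching
    intro i
    constructor
    · intro e he; exact he.1
    · intro v
      obtain ⟨w, hw⟩ := hφ v
      -- injectivity of φ on the incidence set of v
      have hfin : (G.incidenceSet v).Finite := by
        by_contra hinf
        have := Set.Infinite.ncard hinf
        rw [incidence_ncard G hG v] at this
        exact three_ne_zero this
      have hinj : Set.InjOn φ (G.incidenceSet v) := by
        apply Set.injOn_of_ncard_image_eq _ hfin
        rw [hw, petersen_incidence_ncard, incidence_ncard G hG v]
      -- the unique edge of NP i at w
      obtain ⟨f, hf⟩ := Finset.card_eq_one.mp (npFilterCard i w)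
      have hfmem : f ∈ (NP i).filter (fun e => w ∈ e) := by rw [hf]; exact Finset.mem_singleton_self f
      rw [Finset.mem_filter] at hfmem
      have hfinc : f ∈ Petersen.incidenceSet w := ⟨npSubset i f hfmem.1, hfmem.2⟩
      rw [← hw] at hfinc
      obtain ⟨e, he, hfe⟩ := hfinc
      refine ⟨e, ⟨⟨he.1, by rw [hfe]; exact hfmem.1⟩, he.2⟩, ?_⟩
      intro e' ⟨⟨he'E, he'N⟩, hve'⟩
      have he'inc : e' ∈ G.incidenceSet v := ⟨he'E, hve'⟩
      have hφe' : φ e' ∈ Petersen.incidenceSet w := by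
        rw [← hw]; exact ⟨e', he'inc, rfl⟩
      have : φ e' ∈ (NP i).filter (fun e => w ∈ e) :=
        Finset.mem_filter.mpr ⟨he'N, hφe'.2⟩
      rw [hf, Finset.mem_singleton] at this
      exact hinj he'inc he (by rw [this, hfe])
  · -- each edge is in exactly two of the matchings
    intro e he
    -- pick a vertex of e
    obtain ⟨v, hv⟩ : ∃ v, v ∈ e := by
      induction e using Sym2.ind with
      | _ u v => exact ⟨u, Sym2.mem_mk_left u v⟩
    obtain ⟨w, hw⟩ := hφ v
    have hφe : φ e ∈ Petersen.incidenceSet w := by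
      rw [← hw]; exact ⟨e, ⟨he, hv⟩, rfl⟩
    have hset : {i : Fin 6 | e ∈ {e | e ∈ G.edgeSet ∧ φ e ∈ NP i}} =
        ↑(Finset.univ.filter (fun i : Fin 6 => φ e ∈ NP i)) := by
      ext i; simp [he]
    rw [hset, Set.ncard_coe_finset]
    exact npCount (φ e) hφe.1
end

section
/- Let G and H be cubic graphs and let φ : E(G) → E(H) be an H-coloring of G. If c is a normal proper k-edge-coloring of H, then the composition c ∘ φ is a normal proper k-edge-coloring of G. -/
open SimpleGraph

/-- In a cubic graph, each incidence set has 3 elements. -/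
lemma incidenceSet_ncard_of_cubic {V : Type*} {G : SimpleGraph V} (hG : IsCubic G) (v : V) :
    (G.incidenceSet v).ncard = 3 := by
  have : DecidableEq V := Classical.decEq V
  have := Nat.card_congr (G.incidenceSetEquivNeighborSet v)
  rwa [Nat.card_coe_set_eq, Nat.card_coe_set_eq, hG v] at this

lemma colorSet_ncard {W α : Type*} {H : SimpleGraph W} (hH : IsCubic H)
    {c : Sym2 W → α} (hc : IsProperEdgeColoring H c) (w : W) :
    (colorSet H c w).ncard = 3 := by
  have hinj : Set.InjOn c (H.incidenceSet w) := by
    intro e₁ h₁ e₂ h₂ hce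
    by_contra hne
    exact hc e₁ h₁.1 e₂ h₂.1 hne ⟨w, h₁.2, h₂.2⟩ hce
  rw [colorSet, Set.ncard_image_of_injOn hinj, incidenceSet_ncard_of_cubic hH]

/-- Composing a normal proper `k`-edge-coloring of `H` with an `H`-coloring of `G`
yields a normal proper `k`-edge-coloring of `G`. -/
theorem normal_comp_hcoloring {V W : Type*} (G : SimpleGraph V) (H : SimpleGraph W)
    (hG : IsCubic G) (hH : IsCubic H) (φ : Sym2 V → Sym2 W)
    (hφ : IsHColoring G H φ) (k : ℕ) (c : Sym2 W → Fin k)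
    (hc : IsNormalEdgeColoring H c) :
    IsNormalEdgeColoring G (c ∘ φ) := by
  have hfin : ∀ v : V, (G.incidenceSet v).Finite := fun v =>
    Set.finite_of_ncard_ne_zero (by rw [incidenceSet_ncard_of_cubic hG]; norm_num)
  have hinjφ : ∀ v : V, Set.InjOn φ (G.incidenceSet v) := by
    intro v
    obtain ⟨w, hw⟩ := hφ v
    apply Set.injOn_of_ncard_image_eq _ (hfin v)
    rw [hw, incidenceSet_ncard_of_cubic hH, incidenceSet_ncard_of_cubic hG]
  constructor
  · intro e₁ h₁ e₂ h₂ hne ⟨v, hv₁, hv₂⟩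
    obtain ⟨w, hw⟩ := hφ v
    have m₁ : e₁ ∈ G.incidenceSet v := ⟨h₁, hv₁⟩
    have m₂ : e₂ ∈ G.incidenceSet v := ⟨h₂, hv₂⟩
    have hφne : φ e₁ ≠ φ e₂ := fun h => hne (hinjφ v m₁ m₂ h)
    have w₁ : φ e₁ ∈ H.incidenceSet w := hw ▸ Set.mem_image_of_mem φ m₁
    have w₂ : φ e₂ ∈ H.incidenceSet w := hw ▸ Set.mem_image_of_mem φ m₂
    exact hc.1 (φ e₁) w₁.1 (φ e₂) w₂.1 hφne ⟨w, w₁.2, w₂.2⟩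
  · intro u v huv
    obtain ⟨wu, hwu⟩ := hφ u
    obtain ⟨wv, hwv⟩ := hφ v
    have hcu : colorSet G (c ∘ φ) u = colorSet H c wu := by
      rw [colorSet, Set.image_comp, hwu]; rfl
    have hcv : colorSet G (c ∘ φ) v = colorSet H c wv := by
      rw [colorSet, Set.image_comp, hwv]; rfl
    by_cases hww : wu = wv
    · left
      rw [IsPoorEdge, hcu, hcv, ← hww, Set.union_self]
      exact colorSet_ncard hH hc.1 wu
    · have eu : s(u, v) ∈ G.incidenceSet u := G.mk'_mem_incidenceSet_left_iff.2 huv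
      have ev : s(u, v) ∈ G.incidenceSet v := G.mk'_mem_incidenceSet_right_iff.2 huv
      have pu : φ s(u, v) ∈ H.incidenceSet wu := hwu ▸ Set.mem_image_of_mem φ eu
      have pv : φ s(u, v) ∈ H.incidenceSet wv := hwv ▸ Set.mem_image_of_mem φ ev
      have hadj : H.Adj wu wv := H.adj_of_mem_incidenceSet hww pu pv
      rcases hc.2 wu wv hadj with h | h
      · left; rw [IsPoorEdge, hcu, hcv]; exact h
      · right; rw [IsRichEdge, hcu, hcv]; exact h
end

section
/- Let G be a connected cubic graph with at least one edge and let c be a proper edge-coloring of G in which every edge is poor. Then c uses exactly 3 colors on G, i.e., the set of colors appearing on edges of G has cardinality 3. -/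
open SimpleGraph

section
variable {V α : Type*} (G : SimpleGraph V) (c : Sym2 V → α)

private lemma colorSet_ncard_s6 (hG : IsCubic G) (hc : IsProperEdgeColoring G c) (v : V) :
    (colorSet G c v).ncard = 3 ∧ (colorSet G c v).Finite := by
  classical
  have hnfin : (G.neighborSet v).Finite := by
    apply Set.finite_of_ncard_ne_zero; rw [hG v]; norm_num
  have hifin : (G.incidenceSet v).Finite := by
    have : Finite (G.neighborSet v) := hnfin
    exact Set.finite_coe_iff.mp (Finite.of_equiv _ (G.incidenceSetEquivNeighborSet v).symm)
  have hicard : (G.incidenceSet v).ncard = 3 := by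
    rw [← hG v, ← Nat.card_coe_set_eq, ← Nat.card_coe_set_eq]
    exact Nat.card_congr (G.incidenceSetEquivNeighborSet v)
  have hinj : Set.InjOn c (G.incidenceSet v) := by
    intro e₁ h₁ e₂ h₂ hce
    by_contra hne
    exact hc e₁ (G.incidenceSet_subset v h₁) e₂ (G.incidenceSet_subset v h₂) hne
      ⟨v, h₁.2, h₂.2⟩ hce
  constructor
  · rw [colorSet, Set.ncard_image_of_injOn hinj, hicard]
  · exact hifin.image c

private lemma colorSet_eq_of_adj (hG : IsCubic G) (hc : IsProperEdgeColoring G c)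
    (hpoor : ∀ u v : V, G.Adj u v → IsPoorEdge G c u v) {u v : V} (h : G.Adj u v) :
    colorSet G c u = colorSet G c v := by
  obtain ⟨hcu, hfu⟩ := colorSet_ncard_s6 G c hG hc u
  obtain ⟨hcv, hfv⟩ := colorSet_ncard_s6 G c hG hc v
  have hfin : (colorSet G c u ∪ colorSet G c v).Finite := hfu.union hfv
  have hpu := hpoor u v h
  rw [IsPoorEdge] at hpu
  have e1 : colorSet G c u = colorSet G c u ∪ colorSet G c v :=
    Set.eq_of_subset_of_ncard_le Set.subset_union_left (by rw [hpu, hcu]) hfin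
  have e2 : colorSet G c v = colorSet G c u ∪ colorSet G c v :=
    Set.eq_of_subset_of_ncard_le Set.subset_union_right (by rw [hpu, hcv]) hfin
  exact e1.trans e2.symm

end

/-- A proper edge-coloring of a connected cubic graph with at least one edge
in which every edge is poor uses exactly 3 colors. -/
theorem all_poor_three_colors {V α : Type*} (G : SimpleGraph V) (hG : IsCubic G)
    (hconn : G.Connected) (hne : G.edgeSet.Nonempty) (c : Sym2 V → α)
    (hc : IsProperEdgeColoring G c)
    (hpoor : ∀ u v : V, G.Adj u v → IsPoorEdge G c u v) :
    (c '' G.edgeSet).ncard = 3 := by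
  obtain ⟨e0, he0⟩ := hne
  induction e0 using Sym2.inductionOn with
  | hf a b =>
  rw [SimpleGraph.mem_edgeSet] at he0
  have hsame : ∀ v : V, colorSet G c v = colorSet G c a := by
    intro v
    obtain ⟨w⟩ := (hconn v a)
    clear he0
    induction w with
    | nil => rfl
    | cons h p ih => exact (colorSet_eq_of_adj G c hG hc hpoor h).trans ih
  have himg : c '' G.edgeSet = colorSet G c a := by
    apply Set.Subset.antisymm
    · rintro x ⟨e, he, rfl⟩
      induction e using Sym2.inductionOn with
      | hf u v =>
        have : s(u, v) ∈ G.incidenceSet u := ⟨he, by simp⟩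
        have hx : c s(u, v) ∈ colorSet G c u := ⟨_, this, rfl⟩
        rwa [hsame u] at hx
    · rintro x ⟨e, he, rfl⟩
      exact ⟨e, G.incidenceSet_subset a he, rfl⟩
  rw [himg]
  exact (colorSet_ncard_s6 G c hG hc a).1
end
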